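/- arXiv:2502.11091 — 6 statements merged into one kernel-verified Lean document; each statement's English description precedes it below -/
import Mathlib

section
/- (Completeness of QFUA) For all resource functions P, Q depending on only finitely many variables (finitely supported) and all commands C: if the QFUA validity ⊨F [P] C [Q] holds, then ⊢F [P] C [Q] is derivable in the QFUA proof system. -/
/-! Basic language: variables, states, semantic expressions, resource values. -/

abbrev Var := String
abbrev State := Var → ℤ
abbrev AExp := State → ℤ
abbrev BExp := State → Bool

/-- Resource values: ℤ ∪ {−∞, +∞}. -/
abbrev RVal := WithTop (WithBot ℤ)
/-- Resource functions. -/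
abbrev RF := State → RVal

/-- Embedding of an integer into `RVal`. -/
def iv (n : ℤ) : RVal := ((n : WithBot ℤ) : RVal)

/-- State update. -/
def upd (σ : State) (x : Var) (v : ℤ) : State := fun y => if y = x then v else σ y

/-- Commands of the IMP-like language. -/
inductive Cmd where
  | skip
  | assign (x : Var) (e : AExp)
  | assume' (b : BExp)
  | tick (e : AExp)
  | seq (c₁ c₂ : Cmd)
  | choice (c₁ c₂ : Cmd)
  | star (c : Cmd)
  | local' (x : Var) (c : Cmd)

/-- Resource-aware big-step semantics: `BigStep C σ p l τ q` is C, σ, p ⇓_l τ, q. -/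
inductive BigStep : Cmd → State → ℤ → ℤ → State → ℤ → Prop where
  | skip {σ p} : BigStep .skip σ p p σ p
  | assign {x e σ p} : BigStep (.assign x e) σ p p (upd σ x (e σ)) p
  | assume' {b : BExp} {σ p} : b σ = true → BigStep (.assume' b) σ p p σ p
  | tick {e σ p} : BigStep (.tick e) σ p (min p (p - e σ)) σ (p - e σ)
  | seq {c₁ c₂ σ p l₁ ρ r l₂ τ q} : BigStep c₁ σ p l₁ ρ r → BigStep c₂ ρ r l₂ τ q →
      BigStep (.seq c₁ c₂) σ p (min l₁ l₂) τ q
  | choiceL {c₁ c₂ σ p l τ q} : BigStep c₁ σ p l τ q → BigStep (.choice c₁ c₂) σ p l τ q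
  | choiceR {c₁ c₂ σ p l τ q} : BigStep c₂ σ p l τ q → BigStep (.choice c₁ c₂) σ p l τ q
  | starZero {c σ p} : BigStep (.star c) σ p p σ p
  | starStep {c σ p l τ q} : BigStep (.seq c (.star c)) σ p l τ q → BigStep (.star c) σ p l τ q
  | local' {x c σ p l τ q} (v : ℤ) : BigStep c σ p l τ q →
      BigStep (.local' x c) (upd σ x v) p l (upd τ x v) q

/-- C, σ, p ⇓ τ, q. -/
def BigStepP (c : Cmd) (σ : State) (p : ℤ) (τ : State) (q : ℤ) : Prop :=
  ∃ l, BigStep c σ p l τ q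

/-- C, σ, p ⇓≤0 τ, q. -/
def BigStepL (c : Cmd) (σ : State) (p : ℤ) (τ : State) (q : ℤ) : Prop :=
  ∃ l ≤ 0, BigStep c σ p l τ q

/-- `Indep f S`: the state function `f` does not depend on the variables in `S`
(i.e. fv(f) ∩ S = ∅). -/
def Indep {α : Type _} (f : State → α) (S : Set Var) : Prop :=
  ∀ σ σ' : State, (∀ y ∉ S, σ y = σ' y) → f σ = f σ'

/-- `Fresh y f`: the variable `y` is not free in the state function `f`. -/
def Fresh {α : Type _} (y : Var) (f : State → α) : Prop :=
  ∀ σ v, f (upd σ y v) = f σ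

/-- The set of variables possibly modified by a command. -/
def modVars : Cmd → Set Var
  | .skip => ∅
  | .assign x _ => {x}
  | .assume' _ => ∅
  | .tick _ => ∅
  | .seq c₁ c₂ => modVars c₁ ∪ modVars c₂
  | .choice c₁ c₂ => modVars c₁ ∪ modVars c₂
  | .star c => modVars c
  | .local' x c => modVars c \ {x}

/-- Substitution e[y/x] on semantic expressions. -/
def esubst {α : Type _} (e : State → α) (x y : Var) : State → α :=
  fun σ => e (upd σ x (σ y))

/-- `y` is not free in the command `C`. -/
def freshC (y : Var) : Cmd → Prop
  | .skip => True
  | .assign z e => y ≠ z ∧ Fresh y e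
  | .assume' b => Fresh y b
  | .tick e => Fresh y e
  | .seq c₁ c₂ => freshC y c₁ ∧ freshC y c₂
  | .choice c₁ c₂ => freshC y c₁ ∧ freshC y c₂
  | .star c => freshC y c
  | .local' z c => y = z ∨ freshC y c

/-- Substitution C[y/x]: rename every free occurrence of `x` in `C` to `y`. -/
def csubst : Cmd → Var → Var → Cmd
  | .skip, _, _ => .skip
  | .assign z e, x, y => .assign (if z = x then y else z) (esubst e x y)
  | .assume' b, x, y => .assume' (esubst b x y)
  | .tick e, x, y => .tick (esubst e x y)
  | .seq c₁ c₂, x, y => .seq (csubst c₁ x y) (csubst c₂ x y)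
  | .choice c₁ c₂, x, y => .choice (csubst c₁ x y) (csubst c₂ x y)
  | .star c, x, y => .star (csubst c x y)
  | .local' z c, x, y => if z = x then .local' z c else .local' z (csubst c x y)

/-- Bounded iteration: C⁰ = skip, C^(n+1) = C; Cⁿ. -/
def iter (c : Cmd) : ℕ → Cmd
  | 0 => .skip
  | n + 1 => .seq c (iter c n)

/-- Pointwise order on resource functions. -/
def rle (P Q : RF) : Prop := ∀ σ, P σ ≤ Q σ

/-- [B]: +∞ if B holds, −∞ otherwise. -/
def bnd (b : BExp) : RF := fun σ => if b σ then ⊤ else ⊥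

/-- `P` is finitely supported: it depends on only finitely many variables. -/
def FinSupp (P : RF) : Prop := ∃ S : Finset Var, Indep P ((↑S : Set Var)ᶜ)

/-- Semantic equivalence of commands. -/
def CEquiv (c c' : Cmd) : Prop := ∀ σ p l τ q, BigStep c σ p l τ q ↔ BigStep c' σ p l τ q

/-- QFUA validity ⊨F [P] C [Q]. -/
def FValid (P : RF) (c : Cmd) (Q : RF) : Prop :=
  ∀ τ (q : ℤ), Q τ ≤ iv q → ∃ σ, ∃ p : ℤ, P σ ≤ iv p ∧ BigStepP c σ p τ q

/-- QBUA validity ⊨B [P] C [Q]. -/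
def BValid (P : RF) (c : Cmd) (Q : RF) : Prop :=
  ∀ σ (p : ℤ), iv p ≤ P σ → ∃ τ, ∃ q : ℤ, iv q ≤ Q τ ∧ BigStepP c σ p τ q

/-- QBUA◇ validity ⊨B◇ [P] C [Q]. -/
def DValid (P : RF) (c : Cmd) (Q : RF) : Prop :=
  ∀ σ (p : ℤ), iv p ≤ P σ → ∃ τ, ∃ q : ℤ, iv q ≤ Q τ ∧ BigStepL c σ p τ q

/-- The QFUA proof system ⊢F [P] C [Q]. -/
inductive QFUA : RF → Cmd → RF → Prop where
  | skip {P} : QFUA P .skip P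
  | assign {P : RF} {x e} :
      QFUA P (.assign x e)
        (fun τ => ⨅ v : ℤ, max (P (upd τ x v)) (if τ x = e (upd τ x v) then ⊥ else ⊤))
  | assume' {P : RF} {b : BExp} :
      QFUA (fun σ => max (P σ) (if b σ then ⊥ else ⊤)) (.assume' b)
        (fun σ => max (P σ) (if b σ then ⊥ else ⊤))
  | tick {P : RF} {e} : QFUA P (.tick e) (fun σ => P σ + iv (-(e σ)))
  | seq {P R Q c₁ c₂} : QFUA P c₁ R → QFUA R c₂ Q → QFUA P (.seq c₁ c₂) Q
  | choiceL {P Q c₁ c₂} : QFUA P c₁ Q → QFUA P (.choice c₁ c₂) Q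
  | choiceR {P Q c₁ c₂} : QFUA P c₂ Q → QFUA P (.choice c₁ c₂) Q
  | loop {P : ℕ → RF} {k : ℕ} {c} :
      (∀ n < k, QFUA (P n) c (P (n + 1))) → QFUA (P 0) (.star c) (P k)
  | local' {P Q : RF} {x c} : QFUA P c Q →
      QFUA (fun σ => ⨅ v : ℤ, P (upd σ x v)) (.local' x c) (fun σ => ⨅ v : ℤ, Q (upd σ x v))
  | disj {I : Type} {Ps Qs : I → RF} {c} : (∀ i, QFUA (Ps i) c (Qs i)) →
      QFUA (fun σ => ⨅ i, Ps i σ) c (fun σ => ⨅ i, Qs i σ)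
  | constancy {P Q : RF} {b : BExp} {c} : QFUA P c Q → Indep b (modVars c) →
      QFUA (fun σ => max (P σ) (bnd b σ)) c (fun σ => max (Q σ) (bnd b σ))
  | relax {P Q F : RF} {c} : QFUA P c Q → Indep F (modVars c) →
      QFUA (fun σ => P σ + F σ) c (fun σ => Q σ + F σ)
  | cons {P P' Q Q' : RF} {c} : rle P P' → QFUA P' c Q' → rle Q' Q → QFUA P c Q
  | subst {P Q : RF} {c x y} : QFUA P c Q → Fresh y P → Fresh y Q → freshC y c →
      QFUA (esubst P x y) (csubst c x y) (esubst Q x y)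
  | equiv {P Q c c'} : QFUA P c Q → CEquiv c c' → QFUA P c' Q



/-! ### Auxiliary development for completeness -/

section Aux

open Classical in
/-- Point-mass resource function: `iv p` at `σ`, `⊤` elsewhere. -/
noncomputable def dirac (σ : State) (p : ℤ) : RF :=
  fun σ' => if σ' = σ then iv p else ⊤

lemma dirac_self (σ : State) (p : ℤ) : dirac σ p σ = iv p := by simp [dirac]

lemma dirac_ne {σ' σ : State} (h : σ' ≠ σ) (p : ℤ) : dirac σ p σ' = ⊤ := by
  simp [dirac, h]

lemma rle_dirac {P : RF} {σ : State} {p : ℤ} (h : P σ ≤ iv p) : rle P (dirac σ p) := by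
  intro s
  by_cases hs : s = σ
  · subst hs; rw [dirac_self]; exact h
  · rw [dirac_ne hs]; exact le_top

lemma rle_refl (P : RF) : rle P P := fun _ => le_refl _

lemma upd_upd (σ : State) (x : Var) (a b : ℤ) : upd (upd σ x a) x b = upd σ x b := by
  funext y; simp only [upd]; split <;> rfl

lemma upd_self (σ : State) (x : Var) : upd σ x (σ x) = σ := by
  funext y; simp [upd]; intro h; subst h; rfl

lemma upd_same (σ : State) (x : Var) (v : ℤ) : upd σ x v x = v := by simp [upd]

lemma iv_add (a b : ℤ) : iv a + iv b = iv (a + b) := by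
  simp [iv, ← WithBot.coe_add, ← WithTop.coe_add]

lemma iv_le_iv {a b : ℤ} (h : a ≤ b) : iv a ≤ iv b := by
  simp [iv]; exact_mod_cast h

/-- A chain of dirac triples for `c`, from `(σ, p)` to `(τ, q)`. -/
def Chain (c : Cmd) (σ : State) (p : ℤ) (τ : State) (q : ℤ) : Prop :=
  ∃ n : ℕ, ∃ f : ℕ → State × ℤ, f 0 = (σ, p) ∧ f n = (τ, q) ∧
    ∀ i < n, QFUA (dirac (f i).1 (f i).2) c (dirac (f (i+1)).1 (f (i+1)).2)

lemma Chain.single (c : Cmd) (σ : State) (p : ℤ) : Chain c σ p σ p :=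
  ⟨0, fun _ => (σ, p), rfl, rfl, fun i hi => absurd hi (by omega)⟩

lemma Chain.cons {c σ p ρ r τ q} (hd : QFUA (dirac σ p) c (dirac ρ r))
    (h : Chain c ρ r τ q) : Chain c σ p τ q := by
  obtain ⟨n, f, h0, hn, hs⟩ := h
  refine ⟨n + 1, fun i => if i = 0 then (σ, p) else f (i - 1), by simp, by simp [hn], ?_⟩
  intro i hi
  cases i with
  | zero => simpa [h0] using hd
  | succ j => simpa using hs j (by omega)

lemma Chain.star {c σ p τ q} (h : Chain c σ p τ q) :
    QFUA (dirac σ p) (.star c) (dirac τ q) := by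
  obtain ⟨n, f, h0, hn, hs⟩ := h
  have := QFUA.loop (P := fun i => dirac (f i).1 (f i).2) (k := n) (c := c) hs
  simpa [h0, hn] using this

/-- Key pointwise lemma: every single execution yields a derivable dirac triple. -/
theorem pt {C σ p l τ q} (h : BigStep C σ p l τ q) :
    QFUA (dirac σ p) C (dirac τ q) ∧
    (∀ c', C = .star c' → Chain c' σ p τ q) ∧
    (∀ c', C = .seq c' (.star c') → Chain c' σ p τ q) := by
  induction h with
  | @skip σ p =>
      exact ⟨QFUA.skip, by rintro c' ⟨⟩, by rintro c' ⟨⟩⟩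
  | @assign x e σ p =>
      refine ⟨?_, by rintro c' ⟨⟩, by rintro c' ⟨⟩⟩
      refine QFUA.cons (rle_refl _) (QFUA.assign (P := dirac σ p) (x := x) (e := e)) ?_
      intro s
      by_cases hs : s = upd σ x (e σ)
      · subst hs
        rw [dirac_self]
        refine iInf_le_of_le (σ x) ?_
        show max (dirac σ p (upd (upd σ x (e σ)) x (σ x)))
          (if (upd σ x (e σ)) x = e (upd (upd σ x (e σ)) x (σ x)) then ⊥ else ⊤) ≤ iv p
        rw [upd_upd, upd_self, dirac_self, upd_same, if_pos rfl]
        exact max_le (le_refl _) bot_le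
      · rw [dirac_ne hs]; exact le_top
  | @assume' b σ p hb =>
      refine ⟨?_, by rintro c' ⟨⟩, by rintro c' ⟨⟩⟩
      refine QFUA.cons (P' := fun s => max (dirac σ p s) (if b s then ⊥ else ⊤))
        (fun s => le_max_left _ _) QFUA.assume' ?_
      intro s
      by_cases hs : s = σ
      · subst hs
        show max (dirac s p s) (if b s then ⊥ else ⊤) ≤ dirac s p s
        rw [dirac_self, hb, if_pos rfl]
        exact max_le (le_refl _) bot_le
      · rw [dirac_ne hs]; exact le_top
  | @tick e σ p =>
      refine ⟨?_, by rintro c' ⟨⟩, by rintro c' ⟨⟩⟩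
      refine QFUA.cons (rle_refl _) (QFUA.tick (P := dirac σ p) (e := e)) ?_
      intro s
      by_cases hs : s = σ
      · subst hs
        show dirac s p s + iv (-(e s)) ≤ dirac s (p - e s) s
        rw [dirac_self, dirac_self, iv_add, sub_eq_add_neg]
      · rw [dirac_ne hs]; exact le_top
  | @seq c₁ c₂ σ p l₁ ρ r l₂ τ q h₁ h₂ ih₁ ih₂ =>
      refine ⟨QFUA.seq ih₁.1 ih₂.1, by rintro c' ⟨⟩, ?_⟩
      rintro c' heq
      injection heq with e1 e2
      subst e1; subst e2
      exact Chain.cons ih₁.1 (ih₂.2.1 _ rfl)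
  | @choiceL c₁ c₂ σ p l τ q h ih =>
      exact ⟨QFUA.choiceL ih.1, by rintro c' ⟨⟩, by rintro c' ⟨⟩⟩
  | @choiceR c₁ c₂ σ p l τ q h ih =>
      exact ⟨QFUA.choiceR ih.1, by rintro c' ⟨⟩, by rintro c' ⟨⟩⟩
  | @starZero c σ p =>
      refine ⟨(Chain.single c σ p).star, ?_, by rintro c' ⟨⟩⟩
      rintro c' heq
      injection heq with e1
      subst e1
      exact Chain.single _ σ p
  | @starStep c σ p l τ q h ih =>
      have hch : Chain c σ p τ q := ih.2.2 c rfl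
      refine ⟨hch.star, ?_, by rintro c' ⟨⟩⟩
      rintro c' heq
      injection heq with e1
      subst e1
      exact hch
  | @local' x c σ p l τ q v h ih =>
      refine ⟨?_, by rintro c' ⟨⟩, by rintro c' ⟨⟩⟩
      have h1 := QFUA.local' (x := x) ih.1
      have hb : Indep (fun s : State => decide (s x ≠ v)) (modVars (.local' x c)) := by
        intro s s' hss
        have : s x = s' x := hss x (by simp [modVars])
        simp [this]
      have h2 := QFUA.constancy h1 hb
      refine QFUA.cons ?_ h2 ?_
      · intro s
        by_cases hs : s = upd σ x v
        · subst hs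
          rw [dirac_self]
          refine le_trans ?_ (le_max_left _ _)
          refine le_iInf fun w => ?_
          show iv p ≤ dirac σ p (upd (upd σ x v) x w)
          by_cases hw : upd (upd σ x v) x w = σ
          · rw [hw, dirac_self]
          · rw [dirac_ne hw]; exact le_top
        · by_cases hx : s x = v
          · rw [dirac_ne hs]
            have hall : ∀ w : ℤ, upd s x w ≠ σ := by
              intro w hw
              apply hs
              have : s = upd (upd s x w) x (s x) := by rw [upd_upd, upd_self]
              rw [this, hw, hx]
            refine le_trans ?_ (le_max_left _ _)
            refine le_iInf fun w => ?_
            show (⊤ : RVal) ≤ dirac σ p (upd s x w)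
            rw [dirac_ne (hall w)]
          · rw [dirac_ne hs]
            refine le_trans ?_ (le_max_right _ _)
            show (⊤ : RVal) ≤ bnd (fun s : State => decide (s x ≠ v)) s
            simp [bnd, hx]
      · intro s
        by_cases hs : s = upd τ x v
        · subst hs
          rw [dirac_self]
          refine max_le ?_ ?_
          · refine iInf_le_of_le (τ x) ?_
            show dirac τ q (upd (upd τ x v) x (τ x)) ≤ iv q
            rw [upd_upd, upd_self, dirac_self]
          · show bnd (fun s : State => decide (s x ≠ v)) (upd τ x v) ≤ iv q
            simp [bnd, upd_same]
        · rw [dirac_ne hs]; exact le_top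

lemma le_iv_all {a : RVal} (h : ∀ m : ℤ, a ≤ iv m) :
    a ≤ ((⊥ : WithBot ℤ) : RVal) := by
  cases a with
  | none =>
      exfalso
      have h0 : iv 0 = ⊤ := top_le_iff.mp (h 0)
      simp [iv] at h0
  | some b =>
      cases b with
      | bot => exact le_refl _
      | coe n =>
          exfalso
          have h1 : iv n ≤ iv (n - 1) := h (n - 1)
          rw [iv, iv] at h1
          have h2 : (n : ℤ) ≤ n - 1 := by exact_mod_cast h1
          omega

end Aux

theorem qfua_completeness :
    ∀ (P Q : RF) (C : Cmd), FinSupp P → FinSupp Q → FValid P C Q → QFUA P C Q := by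
  intro P Q C _ _ hv
  classical
  have hi : ∀ i : {t : State × ℤ // Q t.1 ≤ iv t.2}, QFUA P C (dirac i.1.1 i.1.2) := by
    intro i
    obtain ⟨σ, p, hP, l, hstep⟩ := hv i.1.1 i.1.2 i.2
    exact QFUA.cons (rle_dirac hP) (pt hstep).1 (rle_refl _)
  have hdisj := QFUA.disj (I := {t : State × ℤ // Q t.1 ≤ iv t.2})
    (Ps := fun _ => P) (Qs := fun i => dirac i.1.1 i.1.2) hi
  refine QFUA.cons ?_ hdisj ?_
  · intro s; exact le_iInf fun _ => le_refl _
  · intro τ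
    show (⨅ i : {t : State × ℤ // Q t.1 ≤ iv t.2}, dirac i.1.1 i.1.2 τ) ≤ Q τ
    cases hq : Q τ with
    | none => exact le_top
    | some b =>
        cases b with
        | bot =>
            refine le_iv_all fun m => ?_
            refine iInf_le_of_le ⟨(τ, m), by
              show Q τ ≤ iv m
              rw [hq]; exact WithTop.coe_le_coe.mpr bot_le⟩ ?_
            show dirac τ m τ ≤ iv m
            rw [dirac_self]
        | coe m =>
            refine iInf_le_of_le ⟨(τ, m), by
              show Q τ ≤ iv m
              rw [hq]; exact le_refl _⟩ ?_
            show dirac τ m τ ≤ iv m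
            rw [dirac_self]
end

section
/- (Semantic soundness of the QFUA loop subvariant rule) Let k ∈ ℕ and let P : ℕ → resource functions. If ⊨F [P(n)] C [P(n+1)] holds for every n < k, then ⊨F [P(0)] C⋆ [P(k)] holds. -/
theorem fvalid_loop_subvariant (k : ℕ) (P : ℕ → RF) (C : Cmd)
    (h : ∀ n < k, FValid (P n) C (P (n + 1))) :
    FValid (P 0) (.star C) (P k) := by
  have key : ∀ m n, n + m = k → FValid (P n) (.star C) (P k) := by
    intro m
    induction m with
    | zero =>
      intro n hn τ q hq
      subst hn
      exact ⟨τ, q, hq, q, .starZero⟩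
    | succ m ih =>
      intro n hn τ q hq
      have hnk : n < k := by omega
      obtain ⟨ρ, r, hρ, l, hstar⟩ := ih (n + 1) (by omega) τ q hq
      obtain ⟨σ, p, hσ, l', hC⟩ := h n hnk ρ r hρ
      exact ⟨σ, p, hσ, min l' l, .starStep (.seq hC hstar)⟩
  exact key k 0 (by omega)
end

section
/- (Semantic soundness of the QBUA loop subvariant rule) Let k ∈ ℕ and let P : ℕ → resource functions. If ⊨B [P(n)] C [P(n+1)] holds for every n < k, then ⊨B [P(0)] C⋆ [P(k)] holds. -/
theorem bvalid_loop_subvariant (k : ℕ) (P : ℕ → RF) (C : Cmd)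
    (h : ∀ n < k, BValid (P n) C (P (n + 1))) :
    BValid (P 0) (.star C) (P k) := by
  induction k generalizing P with
  | zero =>
    intro σ p hp
    exact ⟨σ, p, hp, p, .starZero⟩
  | succ k ih =>
    intro σ p hp
    obtain ⟨ρ, r, hr, l₁, hstep⟩ := h 0 (Nat.succ_pos k) σ p hp
    obtain ⟨τ, q, hq, l₂, hstar⟩ :=
      ih (fun n => P (n + 1)) (fun n hn => h (n + 1) (Nat.succ_lt_succ hn)) ρ r hr
    exact ⟨τ, q, hq, min l₁ l₂, .starStep (.seq hstep hstar)⟩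
end

section
/- (Semantic soundness of the QBUA◇ loop rule) Let k ∈ ℕ and let P : ℕ → resource functions. If ⊨B [P(n)] C [P(n+1)] holds for every n < k, and ⊨B◇ [P(m)] C [P(m+1)] holds for some m < k, then ⊨B◇ [P(0)] C⋆ [P(k)] holds. -/
private lemma dvalid_chain (C : Cmd) :
    ∀ (j : ℕ) (Q : ℕ → RF), (∀ n < j, BValid (Q n) C (Q (n + 1))) →
    ∀ σ (p : ℤ), iv p ≤ Q 0 σ →
    ∃ ρ, ∃ r : ℤ, iv r ≤ Q j ρ ∧
      ∀ l' τ (q : ℤ), BigStep (.star C) ρ r l' τ q →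
        ∃ l ≤ l', BigStep (.star C) σ p l τ q := by
  intro j
  induction j with
  | zero =>
    intro Q _ σ p hp
    exact ⟨σ, p, hp, fun l' τ q hs => ⟨l', le_refl _, hs⟩⟩
  | succ j ih =>
    intro Q hQ σ p hp
    obtain ⟨ρ₁, r₁, hr₁, l₀, h₀⟩ := hQ 0 (Nat.succ_pos j) σ p hp
    obtain ⟨ρ, r, hr, cont⟩ := ih (fun n => Q (n + 1))
      (fun n hn => hQ (n + 1) (by omega)) ρ₁ r₁ hr₁
    refine ⟨ρ, r, hr, fun l' τ q hs => ?_⟩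
    obtain ⟨l₂, hl₂, hs₂⟩ := cont l' τ q hs
    exact ⟨min l₀ l₂, le_trans (min_le_right _ _) hl₂,
      .starStep (.seq h₀ hs₂)⟩

theorem dvalid_loop_subvariant_PROOF (k : ℕ) (P : ℕ → RF) (C : Cmd)
    (h : ∀ n < k, BValid (P n) C (P (n + 1)))
    (hd : ∃ m < k, DValid (P m) C (P (m + 1))) :
    DValid (P 0) (.star C) (P k) := by
  obtain ⟨m, hm, hdm⟩ := hd
  intro σ p hp
  -- phase 1: from P 0 to P m
  obtain ⟨ρ, r, hr, cont₁⟩ := dvalid_chain C m P (fun n hn => h n (by omega)) σ p hp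
  -- diamond step: from P m to P (m+1)
  obtain ⟨ρ₂, r₂, hr₂, l₀, hl₀, h₀⟩ := hdm ρ r hr
  -- phase 3: from P (m+1) to P k
  obtain ⟨τ, q, hq, cont₃⟩ := dvalid_chain C (k - (m + 1)) (fun n => P (m + 1 + n))
    (fun n hn => by
      have : m + 1 + (n + 1) = m + 1 + n + 1 := by omega
      rw [this]; exact h (m + 1 + n) (by omega)) ρ₂ r₂ (by simpa using hr₂)
  have hk : m + 1 + (k - (m + 1)) = k := by omega
  rw [hk] at hq
  obtain ⟨l₂, _, hs₂⟩ := cont₃ q τ q BigStep.starZero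
  have hstar : BigStep (.star C) ρ r (min l₀ l₂) τ q := .starStep (.seq h₀ hs₂)
  obtain ⟨l, hl, hs⟩ := cont₁ (min l₀ l₂) τ q hstar
  exact ⟨τ, q, hq, l, le_trans hl (le_trans (min_le_left _ _) hl₀), hs⟩

theorem dvalid_loop_subvariant (k : ℕ) (P : ℕ → RF) (C : Cmd)
    (h : ∀ n < k, BValid (P n) C (P (n + 1)))
    (hd : ∃ m < k, DValid (P m) C (P (m + 1))) :
    DValid (P 0) (.star C) (P k) := by
  exact dvalid_loop_subvariant_PROOF k P C h hd
end

section
/- (Semantic soundness of the QFUA Relax rule) If ⊨F [P] C [Q] holds and fv(F) ∩ mod(C) = ∅ (the free variables of the resource function F are not modified by C), then ⊨F [P + F] C [Q + F] holds, where (P + F)(σ) = P(σ) + F(σ). -/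
/-!
Shifting the initial potential by `k` shifts every execution of `C` by `k`, and an execution
leaves `F` unchanged because it only writes `mod(C)`. Given a final budget `q ≥ Q τ + F τ`, split
`q = q₁ + k` with `Q τ ≤ q₁` and `F τ ≤ k` (an inequality, as `F τ` may be `−∞`), run the hypothesis on `q₁` and shift the resulting
execution by `k`.
-/

theorem BigStep.shift {c σ p l τ q} (h : BigStep c σ p l τ q) (k : ℤ) :
    BigStep c σ (p + k) (l + k) τ (q + k) := by
  induction h with
  | skip => exact .skip
  | assign => exact .assign
  | assume' hb => exact .assume' hb
  | tick => convert BigStep.tick using 2 <;> omega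
  | seq _ _ ih₁ ih₂ => rw [← min_add_add_right]; exact .seq ih₁ ih₂
  | choiceL _ ih => exact .choiceL ih
  | choiceR _ ih => exact .choiceR ih
  | starZero => exact .starZero
  | starStep _ ih => exact .starStep ih
  | local' v _ ih => exact .local' v ih

theorem BigStep.eq_of_notMem_modVars {c σ p l τ q} (h : BigStep c σ p l τ q) {y : Var}
    (hy : y ∉ modVars c) : σ y = τ y := by
  induction h with
  | assign => simp_all [modVars, upd]
  | seq _ _ ih₁ ih₂ => simp only [modVars, Set.mem_union, not_or] at hy; rw [ih₁ hy.1, ih₂ hy.2]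
  | choiceL _ ih => exact ih fun hm => hy (Or.inl hm)
  | choiceR _ ih => exact ih fun hm => hy (Or.inr hm)
  | starStep _ ih => exact ih (by simpa [modVars] using hy)
  | @local' x _ _ _ _ _ _ v _ ih =>
    by_cases hyx : y = x
    · simp [upd, hyx]
    · simpa [upd, hyx] using ih fun hm => hy ⟨hm, hyx⟩
  | _ => rfl

theorem exists_add_eq_of_add_le_iv {a b : RVal} {q : ℤ} (h : a + b ≤ iv q) :
    ∃ m n : ℤ, a ≤ iv m ∧ b ≤ iv n ∧ m + n = q := by
  induction a using WithTop.recTopCoe with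
  | top => simp [iv] at h
  | coe a =>
  induction b using WithTop.recTopCoe with
  | top => simp [iv] at h
  | coe b =>
  simp only [iv, ← WithTop.coe_add, WithTop.coe_le_coe] at h ⊢
  induction b using WithBot.recBotCoe with
  | bot => exact ⟨a.unbotD 0, q - a.unbotD 0, a.le_coe_unbotD 0, bot_le, by ring⟩
  | coe n =>
    refine ⟨q - n, n, ?_, le_rfl, by ring⟩
    induction a using WithBot.recBotCoe with
    | bot => exact bot_le
    | coe m => norm_cast at h ⊢; omega

theorem fvalid_relax (P Q F : RF) (C : Cmd)
    (h : FValid P C Q) (hF : Indep F (modVars C)) :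
    FValid (fun σ => P σ + F σ) C (fun σ => Q σ + F σ) := by
  intro τ q hq
  obtain ⟨q₁, k, hQ, hFτ, rfl⟩ := exists_add_eq_of_add_le_iv hq
  obtain ⟨σ, p, hP, l, hexec⟩ := h τ q₁ hQ
  have hFσ : F σ = F τ := hF σ τ fun _ hy => hexec.eq_of_notMem_modVars hy
  refine ⟨σ, p + k, ?_, l + k, hexec.shift k⟩
  calc P σ + F σ ≤ iv p + iv k := add_le_add hP (hFσ ▸ hFτ)
    _ = iv (p + k) := rfl
end

section
/- (Semantic soundness of the QBUA◇ sequencing rules) For all commands C1, C2 and resource functions P, R, Q: if ⊨B◇ [P] C1 [R] and ⊨B [R] C2 [Q] hold, then ⊨B◇ [P] C1; C2 [Q] holds; symmetrically, if ⊨B [P] C1 [R] and ⊨B◇ [R] C2 [Q] hold, then ⊨B◇ [P] C1; C2 [Q] holds. -/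
theorem dvalid_seq (C₁ C₂ : Cmd) (P R Q : RF) :
    (DValid P C₁ R → BValid R C₂ Q → DValid P (.seq C₁ C₂) Q) ∧
    (BValid P C₁ R → DValid R C₂ Q → DValid P (.seq C₁ C₂) Q) := by
  constructor
  · intro h1 h2 σ p hp
    obtain ⟨ρ, r, hr, l₁, hl₁, hb₁⟩ := h1 σ p hp
    obtain ⟨τ, q, hq, l₂, hb₂⟩ := h2 ρ r hr
    exact ⟨τ, q, hq, min l₁ l₂, le_trans (min_le_left _ _) hl₁, .seq hb₁ hb₂⟩
  · intro h1 h2 σ p hp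
    obtain ⟨ρ, r, hr, l₁, hb₁⟩ := h1 σ p hp
    obtain ⟨τ, q, hq, l₂, hl₂, hb₂⟩ := h2 ρ r hr
    exact ⟨τ, q, hq, min l₁ l₂, le_trans (min_le_right _ _) hl₂, .seq hb₁ hb₂⟩
end
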